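/- arXiv:0801.0232 — 3 statements merged into one kernel-verified Lean document; each statement's English description precedes it below -/
import Mathlib

section
/- If an entity has a deterministic environment, is non-contradictory, and there exist two times a < b in its lifetime at which the observer perceives the same pair of states (entity state and environment state), then the perceived entity and environment states are periodic with period b - a from time a onward; in particular the entity's perceived state never becomes 0 after time a, so the entity's lifetime is infinite. -/
/-! Once the perceived pair repeats, the two hypotheses say that the pair at the next time is a
function of the pair now, as long as the entity is alive; so the repetition propagates forward.
Aliveness propagates as well, because each new time `τ + d` carries the same pair as the earlier
time `τ`, which was already known to be alive. -/

section EventuallyPeriodic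

variable {α : Type*} (f : ℕ → α) (good : α → Prop) {a d : ℕ}

lemma periodic_window_succ (hd : 0 < d)
    (hstep : ∀ τ₁ τ₂, a ≤ τ₁ → a ≤ τ₂ → good (f τ₁) → good (f τ₂) → f τ₁ = f τ₂ →
      f (τ₁ + 1) = f (τ₂ + 1))
    {τ : ℕ} (hτ : a ≤ τ) (hwin : ∀ k ≤ d, good (f (τ + k))) (heq : f (τ + d) = f τ) :
    (∀ k ≤ d, good (f (τ + 1 + k))) ∧ f (τ + 1 + d) = f (τ + 1) := by
  have hnext : f (τ + 1 + d) = f (τ + 1) := by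
    rw [Nat.add_right_comm]
    exact hstep _ _ (by omega) hτ (hwin d le_rfl) (by simpa using hwin 0 (Nat.zero_le _)) heq
  refine ⟨fun k hk => ?_, hnext⟩
  rcases hk.lt_or_eq with hk | rfl
  · simpa [Nat.add_assoc, Nat.add_comm 1 k] using hwin (k + 1) hk
  · simpa [hnext] using hwin 1 hd

theorem good_and_periodic_of_eq (hd : 0 < d)
    (hstep : ∀ τ₁ τ₂, a ≤ τ₁ → a ≤ τ₂ → good (f τ₁) → good (f τ₂) → f τ₁ = f τ₂ →
      f (τ₁ + 1) = f (τ₂ + 1))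
    (hgood : ∀ τ, a ≤ τ → τ ≤ a + d → good (f τ)) (heq : f (a + d) = f a) :
    ∀ τ, a ≤ τ → good (f τ) ∧ f (τ + d) = f τ := by
  have hinv : ∀ τ, a ≤ τ → (∀ k ≤ d, good (f (τ + k))) ∧ f (τ + d) = f τ := by
    intro τ hτ
    induction τ, hτ using Nat.le_induction with
    | base => exact ⟨fun k hk => hgood _ (by omega) (by omega), heq⟩
    | succ τ hτ ih => exact periodic_window_succ f good hd hstep hτ ih.1 ih.2
  exact fun τ hτ => ⟨by simpa using (hinv τ hτ).1 0 (Nat.zero_le _), (hinv τ hτ).2⟩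

end EventuallyPeriodic

theorem stmt_0_general {S Pent Penv : Type*}
    (s : ℕ → S) (ps_ent : S → Pent) (ps_ENV : S → Penv) (z : Pent)
    (t a b : ℕ) (hta : t ≤ a) (hab : a < b)
    (halive : ∀ τ, t ≤ τ → τ ≤ b → ps_ent (s τ) ≠ z)
    (hnc : ∀ τ₁ τ₂, t ≤ τ₁ → t ≤ τ₂ → ps_ent (s τ₁) ≠ z → ps_ent (s τ₂) ≠ z →
      (ps_ent (s τ₁), ps_ENV (s τ₁)) = (ps_ent (s τ₂), ps_ENV (s τ₂)) →
      ps_ent (s (τ₁ + 1)) = ps_ent (s (τ₂ + 1)))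
    (hdet : ∀ τ₁ τ₂, t ≤ τ₁ → t ≤ τ₂ → ps_ent (s τ₁) ≠ z → ps_ent (s τ₂) ≠ z →
      (ps_ent (s τ₁), ps_ENV (s τ₁)) = (ps_ent (s τ₂), ps_ENV (s τ₂)) →
      ps_ENV (s (τ₁ + 1)) = ps_ENV (s (τ₂ + 1)))
    (heq : (ps_ent (s a), ps_ENV (s a)) = (ps_ent (s b), ps_ENV (s b))) :
    (∀ τ, a ≤ τ →
      (ps_ent (s (τ + (b - a))), ps_ENV (s (τ + (b - a)))) = (ps_ent (s τ), ps_ENV (s τ))) ∧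
    (∀ τ, a ≤ τ → ps_ent (s τ) ≠ z) ∧
    (∀ τ, t ≤ τ → ps_ent (s τ) ≠ z) := by
  have hab' : a + (b - a) = b := by omega
  have key := good_and_periodic_of_eq (fun τ => (ps_ent (s τ), ps_ENV (s τ))) (·.1 ≠ z)
    (a := a) (Nat.sub_pos_of_lt hab)
    (fun τ₁ τ₂ h₁ h₂ g₁ g₂ e =>
      Prod.ext (hnc τ₁ τ₂ (by omega) (by omega) g₁ g₂ e) (hdet τ₁ τ₂ (by omega) (by omega) g₁ g₂ e))
    (fun τ h₁ h₂ => halive τ (by omega) (by omega)) (by rw [hab']; exact heq.symm)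
  refine ⟨fun τ hτ => (key τ hτ).2, fun τ hτ => (key τ hτ).1, fun τ hτ => ?_⟩
  rcases le_or_gt τ b with hτb | hτb
  · exact halive τ hτ hτb
  · exact (key τ (by omega)).1

/-- If an entity is non-contradictory, has a deterministic environment, and the observer
perceives the same pair of states at two times `a < b` in its lifetime, then the perceived
states are periodic with period `b - a` from `a` onward; in particular the entity's perceived
state never becomes `0` after time `a`, so the lifetime is infinite. -/
theorem stmt_0 {S Pent Penv : Type*} [Fintype Pent] [Fintype Penv]
    (s : ℕ → S) (ps_ent : S → Pent) (ps_ENV : S → Penv) (z : Pent)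
    (t a b : ℕ) (hta : t ≤ a) (hab : a < b)
    (halive : ∀ τ, t ≤ τ → τ ≤ b → ps_ent (s τ) ≠ z)
    (hnc : ∀ τ₁ τ₂, t ≤ τ₁ → t ≤ τ₂ → ps_ent (s τ₁) ≠ z → ps_ent (s τ₂) ≠ z →
      (ps_ent (s τ₁), ps_ENV (s τ₁)) = (ps_ent (s τ₂), ps_ENV (s τ₂)) →
      ps_ent (s (τ₁ + 1)) = ps_ent (s (τ₂ + 1)))
    (hdet : ∀ τ₁ τ₂, t ≤ τ₁ → t ≤ τ₂ → ps_ent (s τ₁) ≠ z → ps_ent (s τ₂) ≠ z →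
      (ps_ent (s τ₁), ps_ENV (s τ₁)) = (ps_ent (s τ₂), ps_ENV (s τ₂)) →
      ps_ENV (s (τ₁ + 1)) = ps_ENV (s (τ₂ + 1)))
    (heq : (ps_ent (s a), ps_ENV (s a)) = (ps_ent (s b), ps_ENV (s b))) :
    (∀ τ, a ≤ τ →
      (ps_ent (s (τ + (b - a))), ps_ENV (s (τ + (b - a)))) = (ps_ent (s τ), ps_ENV (s τ))) ∧
    (∀ τ, a ≤ τ → ps_ent (s τ) ≠ z) ∧
    (∀ τ, t ≤ τ → ps_ent (s τ) ≠ z) :=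
  stmt_0_general s ps_ent ps_ENV z t a b hta hab halive hnc hdet heq
end

section
/- Any entity with a finite lifetime and a deterministic environment whose intelligence (lifetime length minus one) is strictly greater than |P_ent| · |P_ENV| must be contradictory. -/
/-!
If the entity is not contradictory, then on its lifetime the perceived pair
(entity, environment) at time `τ + 1` is a function of the pair at time `τ`, the environment
component by determinism. With more times than possible pairs some pair repeats, at times
`a < b`, and from then on the trajectory repeats with period `b - a`. In particular the pair at
the death time `t + q + 1` already occurs at the earlier time `t + a + q + 1 - b`, where the
entity is alive: contradiction.
-/

open Finset

def NextDeterminedUpTo {α : Type*} (f : ℕ → α) (q : ℕ) : Prop :=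
  ∀ a b, a ≤ q → b ≤ q → f a = f b → f (a + 1) = f (b + 1)

namespace NextDeterminedUpTo

variable {α : Type*} {f : ℕ → α} {q a b : ℕ}

theorem map_add_eq (hf : NextDeterminedUpTo f q) (hab : a ≤ b) (heq : f a = f b) :
    ∀ k, b + k ≤ q + 1 → f (a + k) = f (b + k)
  | 0, _ => heq
  | k + 1, hk => hf (a + k) (b + k) (by omega) (by omega) (hf.map_add_eq hab heq k (by omega))

theorem exists_le_eq_succ (hf : NextDeterminedUpTo f q) (hab : a < b) (hb : b ≤ q)
    (heq : f a = f b) : ∃ c ≤ q, f c = f (q + 1) := by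
  refine ⟨a + (q + 1 - b), by omega, ?_⟩
  rw [hf.map_add_eq hab.le heq (q + 1 - b) (by omega)]
  congr 1
  omega

end NextDeterminedUpTo

theorem exists_lt_le_map_eq_of_card_lt {α : Type*} [Fintype α] (f : ℕ → α) {q : ℕ}
    (hcard : Fintype.card α < q + 1) : ∃ a b, a < b ∧ b ≤ q ∧ f a = f b := by
  obtain ⟨x, hx, y, hy, hne, hxy⟩ :=
    exists_ne_map_eq_of_card_lt_of_maps_to (s := range (q + 1)) (t := univ) (f := f)
      (by simpa using hcard) (fun _ _ => mem_coe.2 (mem_univ _))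
  rw [mem_range] at hx hy
  rcases hne.lt_or_gt with h | h
  · exact ⟨x, y, h, by omega, hxy⟩
  · exact ⟨y, x, h, by omega, hxy.symm⟩

/-- Any entity with a finite lifetime `{t, ..., t+q}` and a deterministic environment whose
intelligence `q` is strictly greater than `|P_ent| * |P_ENV|` must be contradictory. -/
theorem stmt_1 {S Pent Penv : Type*} [Fintype Pent] [Fintype Penv]
    (s : ℕ → S) (ps_ent : S → Pent) (ps_ENV : S → Penv) (z : Pent)
    (t q : ℕ)
    (halive : ∀ τ, τ ≤ q → ps_ent (s (t + τ)) ≠ z)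
    (hend : ps_ent (s (t + q + 1)) = z)
    (hdet : ∀ a b, a ≤ q → b ≤ q →
      (ps_ent (s (t + a)), ps_ENV (s (t + a))) = (ps_ent (s (t + b)), ps_ENV (s (t + b))) →
      ps_ENV (s (t + a + 1)) = ps_ENV (s (t + b + 1)))
    (hint : Fintype.card Pent * Fintype.card Penv < q) :
    ∃ a b, a ≤ q ∧ b ≤ q ∧
      (ps_ent (s (t + a)), ps_ENV (s (t + a))) = (ps_ent (s (t + b)), ps_ENV (s (t + b))) ∧
      ps_ent (s (t + a + 1)) ≠ ps_ent (s (t + b + 1)) := by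
  by_contra! hcons
  set f : ℕ → Pent × Penv := fun τ => (ps_ent (s (t + τ)), ps_ENV (s (t + τ)))
  have hf : NextDeterminedUpTo f q := fun a b ha hb heq =>
    Prod.ext (hcons a b ha hb heq) (hdet a b ha hb heq)
  have hcard : Fintype.card (Pent × Penv) < q + 1 := by rw [Fintype.card_prod]; omega
  obtain ⟨a, b, hab, hb, heq⟩ := exists_lt_le_map_eq_of_card_lt f hcard
  obtain ⟨c, hc, hfc⟩ := hf.exists_le_eq_succ hab hb heq
  exact halive c hc ((congrArg Prod.fst hfc).trans hend)
end

section
/- If a non-contradictory entity in a deterministic environment has a finite lifetime {t, ..., t+q} with q ≥ 1, then the map τ ↦ (ps_ent(s_{t+τ}), ps_ENV(s_{t+τ})) is injective on {0, 1, ..., q}; consequently q + 1 ≤ |P_ent| · |P_ENV|. -/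
/-! If two times `a < b ≤ q` of the lifetime carried the same perceived pair, then, since the pair
at the next step is a function of the current one, the pairs would agree at `a + k` and `b + k`
for every `k` up to `q - b`. At `k = q - b` this gives the perceived pair at `q` back at the
earlier time `a + (q - b)`, so one step later the entity would already be dead at time
`a + (q - b) + 1 ≤ q`. -/

section StepDetermined

variable {α : Type*} {f : ℕ → α} {q : ℕ}

theorem eq_add_of_step_determined
    (hstep : ∀ a b, a ≤ q → b ≤ q → f a = f b → f (a + 1) = f (b + 1))
    {a b : ℕ} (hab : f a = f b) :
    ∀ k, a + k ≤ q → b + k ≤ q → f (a + k) = f (b + k)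
  | 0, _, _ => hab
  | k + 1, ha, hb =>
    hstep (a + k) (b + k) (by omega) (by omega)
      (eq_add_of_step_determined hstep hab k (by omega) (by omega))

theorem injOn_Iic_of_step_determined
    (hstep : ∀ a b, a ≤ q → b ≤ q → f a = f b → f (a + 1) = f (b + 1))
    (hlast : ∀ τ ≤ q, f τ ≠ f (q + 1)) :
    Set.InjOn f (Set.Iic q) := by
  have hlt : ∀ a b, a < b → b ≤ q → f a ≠ f b := by
    intro a b hab hb h
    have hq : f (a + (q - b)) = f q := by
      simpa [Nat.add_sub_cancel' hb] using
        eq_add_of_step_determined hstep h (q - b) (by omega) (by omega)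
    exact hlast (a + (q - b) + 1) (by omega) (hstep _ _ (by omega) le_rfl hq)
  intro a ha b hb h
  by_contra hne
  rcases Nat.lt_or_gt_of_ne hne with hab | hba
  · exact hlt a b hab hb h
  · exact hlt b a hba ha h.symm

end StepDetermined

theorem succ_le_card_of_injOn_Iic {α : Type*} [Fintype α] {f : ℕ → α} {q : ℕ}
    (hf : Set.InjOn f (Set.Iic q)) : q + 1 ≤ Fintype.card α := by
  have hf' : Set.InjOn f (Finset.range (q + 1)) := fun a ha b hb =>
    hf (Nat.lt_succ_iff.mp (Finset.mem_range.mp ha)) (Nat.lt_succ_iff.mp (Finset.mem_range.mp hb))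
  simpa using Finset.card_le_card_of_injOn f (fun a _ => Finset.mem_univ (f a)) hf'

theorem stmt_5_general {S Pent Penv : Type*} [Fintype Pent] [Fintype Penv]
    (s : ℕ → S) (ps_ent : S → Pent) (ps_ENV : S → Penv) (z : Pent)
    (t q : ℕ)
    (halive : ∀ τ, τ ≤ q → ps_ent (s (t + τ)) ≠ z)
    (hend : ps_ent (s (t + q + 1)) = z)
    (hnc : ∀ a b, a ≤ q → b ≤ q →
      (ps_ent (s (t + a)), ps_ENV (s (t + a))) = (ps_ent (s (t + b)), ps_ENV (s (t + b))) →
      ps_ent (s (t + a + 1)) = ps_ent (s (t + b + 1)))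
    (hdet : ∀ a b, a ≤ q → b ≤ q →
      (ps_ent (s (t + a)), ps_ENV (s (t + a))) = (ps_ent (s (t + b)), ps_ENV (s (t + b))) →
      ps_ENV (s (t + a + 1)) = ps_ENV (s (t + b + 1))) :
    Set.InjOn (fun τ => (ps_ent (s (t + τ)), ps_ENV (s (t + τ)))) {τ : ℕ | τ ≤ q} ∧
    q + 1 ≤ Fintype.card Pent * Fintype.card Penv := by
  set pair : ℕ → Pent × Penv := fun τ => (ps_ent (s (t + τ)), ps_ENV (s (t + τ)))
  have hstep : ∀ a b, a ≤ q → b ≤ q → pair a = pair b → pair (a + 1) = pair (b + 1) :=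
    fun a b ha hb h => Prod.ext (hnc a b ha hb h) (hdet a b ha hb h)
  have hlast : ∀ τ ≤ q, pair τ ≠ pair (q + 1) := fun τ hτ h =>
    halive τ hτ ((congrArg Prod.fst h).trans hend)
  have hinj : Set.InjOn pair (Set.Iic q) := injOn_Iic_of_step_determined hstep hlast
  exact ⟨hinj, by simpa using succ_le_card_of_injOn_Iic hinj⟩

/-- A non-contradictory entity in a deterministic environment with finite lifetime
`{t, ..., t+q}` (`q ≥ 1`) has an injective perceived-pair map on `{0, ..., q}`;
consequently `q + 1 ≤ |P_ent| * |P_ENV|`. -/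
theorem stmt_5 {S Pent Penv : Type*} [Fintype Pent] [Fintype Penv]
    (s : ℕ → S) (ps_ent : S → Pent) (ps_ENV : S → Penv) (z : Pent)
    (t q : ℕ) (hq : 1 ≤ q)
    (halive : ∀ τ, τ ≤ q → ps_ent (s (t + τ)) ≠ z)
    (hend : ps_ent (s (t + q + 1)) = z)
    (hnc : ∀ a b, a ≤ q → b ≤ q →
      (ps_ent (s (t + a)), ps_ENV (s (t + a))) = (ps_ent (s (t + b)), ps_ENV (s (t + b))) →
      ps_ent (s (t + a + 1)) = ps_ent (s (t + b + 1)))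
    (hdet : ∀ a b, a ≤ q → b ≤ q →
      (ps_ent (s (t + a)), ps_ENV (s (t + a))) = (ps_ent (s (t + b)), ps_ENV (s (t + b))) →
      ps_ENV (s (t + a + 1)) = ps_ENV (s (t + b + 1))) :
    Set.InjOn (fun τ => (ps_ent (s (t + τ)), ps_ENV (s (t + τ)))) {τ : ℕ | τ ≤ q} ∧
    q + 1 ≤ Fintype.card Pent * Fintype.card Penv :=
  stmt_5_general s ps_ent ps_ENV z t q halive hend hnc hdet
end
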